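/- arXiv:2407.18385 — 5 statements merged into one kernel-verified Lean document; each statement's English description precedes it below -/
import Mathlib

section
/- Let G be a finite group, D ⊆ G, and let Aut(G)_D be the subgroup of automorphisms of G fixing D setwise. Suppose 𝒢 ≤ Aut(G)_D ⋉ G satisfies: |𝒢| = |G|, the subgroup 1 × X := (1 × G) ∩ 𝒢 is normal in both 1 × G and 𝒢, and the action of 𝒢 on the right cosets of X in G given by (Xh)^(φ,g) = X h^φ g is transitive. If D is a (v,k,λ)-difference set in G, then 𝒟 := {(φ,d) ∈ 𝒢 : d ∈ D} is a (v,k,λ)-difference set in 𝒢. -/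
/-- The "right holomorph": pairs (φ, g) with multiplication
(φ₁,g₁)(φ₂,g₂) = (φ₁φ₂, g₁^{φ₂} g₂), composition of automorphisms left-to-right. -/
@[ext] structure RHol (G : Type*) [Group G] where
  aut : MulAut G
  el : G

namespace RHol

variable {G : Type*} [Group G]

instance : Mul (RHol G) := ⟨fun a b => ⟨a.aut.trans b.aut, b.aut a.el * b.el⟩⟩
instance : One (RHol G) := ⟨⟨MulEquiv.refl G, 1⟩⟩
instance : Inv (RHol G) := ⟨fun a => ⟨a.aut.symm, a.aut.symm a.el⁻¹⟩⟩

@[simp] lemma mul_aut (a b : RHol G) : (a * b).aut = a.aut.trans b.aut := rfl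
@[simp] lemma mul_el (a b : RHol G) : (a * b).el = b.aut a.el * b.el := rfl
@[simp] lemma one_aut : (1 : RHol G).aut = MulEquiv.refl G := rfl
@[simp] lemma one_el : (1 : RHol G).el = 1 := rfl
@[simp] lemma inv_aut (a : RHol G) : a⁻¹.aut = a.aut.symm := rfl
@[simp] lemma inv_el (a : RHol G) : a⁻¹.el = a.aut.symm a.el⁻¹ := rfl

instance : Group (RHol G) where
  mul_assoc a b c := by
    refine RHol.ext ?_ ?_
    · exact MulEquiv.ext fun x => rfl
    · show c.aut (b.aut a.el * b.el) * c.el = (b.aut.trans c.aut) a.el * (c.aut b.el * c.el)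
      simp [mul_assoc]
  one_mul a := by
    refine RHol.ext ?_ ?_
    · exact MulEquiv.ext fun x => rfl
    · show a.aut 1 * a.el = a.el
      simp
  mul_one a := by
    refine RHol.ext ?_ ?_
    · exact MulEquiv.ext fun x => rfl
    · show (MulEquiv.refl G) a.el * 1 = a.el
      simp
  inv_mul_cancel a := by
    refine RHol.ext ?_ ?_
    · exact MulEquiv.ext fun x => by simp
    · show a.aut (a.aut.symm a.el⁻¹) * a.el = 1
      simp

end RHol

section Defs

variable {G : Type*} [Group G]

/-- Number of ways to write `g = d₁ * d₂⁻¹` with `d₁, d₂ ∈ D`. -/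
noncomputable def diffCount (D : Set G) (g : G) : ℕ :=
  Nat.card {p : D × D // (p.1 : G) * (p.2 : G)⁻¹ = g}

def IsDiffSet (D : Set G) (v k l : ℕ) : Prop :=
  Nat.card G = v ∧ Nat.card D = k ∧ ∀ g : G, g ≠ 1 → diffCount D g = l

end Defs

/-!
The projection `(φ, g) ↦ g` restricts to a bijection `𝒢 → G`: for `g ∈ X` we have `(1, g) ∈ 𝒢`,
so the image is a union of cosets `X h`, transitivity says it meets all of them, and
`|𝒢| = |G|`. Under this bijection `𝒟` corresponds to `D`. For the differences, `y₁ y₂⁻¹ = x`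
means `y₂, x y₂ ∈ 𝒟`, and since `(x y₂).el = y₂.aut (x.el * y₂.aut⁻¹ y₂.el)` with `y₂.aut`
fixing `D`, the bijection `y₂ ↦ y₂.aut⁻¹ y₂.el` carries these `y₂` onto the `e` with
`e, x.el * e ∈ D`.
-/

lemma Set.mem_iff_of_image_eq {α : Type*} {f : α → α} (hf : Function.Injective f) {D : Set α}
    (hD : f '' D = D) (z : α) : f z ∈ D ↔ z ∈ D := by
  nth_rw 1 [← hD]
  exact hf.mem_set_image

lemma diffCount_eq_card_mem_and_mul_mem {G : Type*} [Group G] (D : Set G) (g : G) :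
    diffCount D g = Nat.card {e : G // e ∈ D ∧ g * e ∈ D} :=
  Nat.card_congr
    { toFun := fun p => ⟨p.1.2, p.1.2.2, by simp [← p.2]⟩
      invFun := fun e => ⟨(⟨g * e, e.2.2⟩, ⟨e, e.2.1⟩), by simp⟩
      left_inv := fun ⟨(d₁, d₂), hp⟩ => by subst hp; ext <;> simp
      right_inv := fun _ => rfl }

namespace RHol

variable {G : Type*} [Group G]

lemma el_mul_eq_aut (a b : RHol G) : (a * b).el = b.aut (a.el * b.aut.symm b.el) := by
  simp

lemma inv_el_inv (b : RHol G) : (b⁻¹.el)⁻¹ = b.aut.symm b.el := by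
  simp

lemma el_surjective_of_transitive {𝒢 : Subgroup (RHol G)} {X : Subgroup G} [X.Normal]
    (hX : ∀ g ∈ X, (⟨1, g⟩ : RHol G) ∈ 𝒢) (htrans : ∀ h : G, ∃ x ∈ 𝒢, x.el * h⁻¹ ∈ X) :
    Function.Surjective fun x : 𝒢 => (x : RHol G).el := by
  intro h
  obtain ⟨x, hx, hxh⟩ := htrans h
  have hmem : x.el⁻¹ * h ∈ X := by
    simpa using inv_mem (Subgroup.Normal.mem_comm inferInstance hxh)
  exact ⟨⟨x, hx⟩ * ⟨⟨1, x.el⁻¹ * h⟩, hX _ hmem⟩, by simp⟩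

section TransferDiffSet

variable {D : Set G} {𝒢 : Subgroup (RHol G)}
  (hel : Function.Bijective fun x : 𝒢 => (x : RHol G).el)
include hel

lemma card_el_mem_eq : Nat.card {x : 𝒢 | (x : RHol G).el ∈ D} = Nat.card D :=
  Nat.card_congr ((Equiv.ofBijective _ hel).subtypeEquiv fun _ => Iff.rfl)

lemma diffCount_el_mem_eq (hfix : ∀ x ∈ 𝒢, x.aut '' D = D) (x : 𝒢) :
    diffCount {y : 𝒢 | (y : RHol G).el ∈ D} x = diffCount D (x : RHol G).el := by
  have htwist : Function.Bijective fun b : 𝒢 => (b : RHol G).aut.symm (b : RHol G).el := by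
    have := inv_involutive.bijective.comp (hel.comp inv_involutive.bijective)
    simpa only [Function.comp_def, Subgroup.coe_inv, inv_el_inv] using this
  rw [diffCount_eq_card_mem_and_mul_mem, diffCount_eq_card_mem_and_mul_mem]
  refine Nat.card_congr ((Equiv.ofBijective _ htwist).subtypeEquiv fun b => ?_)
  have hb := Set.mem_iff_of_image_eq (b : RHol G).aut.injective (hfix b b.2)
  change (b : RHol G).el ∈ D ∧ ((x : RHol G) * b).el ∈ D ↔
    (b : RHol G).aut.symm (b : RHol G).el ∈ D ∧
      (x : RHol G).el * (b : RHol G).aut.symm (b : RHol G).el ∈ D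
  rw [el_mul_eq_aut, hb, ← hb ((b : RHol G).aut.symm _), MulEquiv.apply_symm_apply]

lemma isDiffSet_el_mem (hfix : ∀ x ∈ 𝒢, x.aut '' D = D) {v k l : ℕ} (hDS : IsDiffSet D v k l) :
    IsDiffSet {x : 𝒢 | (x : RHol G).el ∈ D} v k l := by
  obtain ⟨hv, hk, hl⟩ := hDS
  refine ⟨(Nat.card_eq_of_bijective _ hel).trans hv, (card_el_mem_eq hel).trans hk, fun x hx => ?_⟩
  rw [diffCount_el_mem_eq hel hfix]
  exact hl _ fun h => hx (hel.injective (by simpa using h))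

end TransferDiffSet

end RHol

theorem combinatorial_transfer_diff_set_general {G : Type*} [Group G] [Finite G]
    (D : Set G) (v k l : ℕ)
    (𝒢 : Subgroup (RHol G)) (X : Subgroup G)
    -- 𝒢 ≤ Aut(G)_D ⋉ G : every automorphism component of 𝒢 fixes D setwise
    (h𝒢le : ∀ x ∈ 𝒢, (RHol.aut x) '' D = D)
    -- (i) |𝒢| = |G|
    (hcard : Nat.card 𝒢 = Nat.card G)
    -- 1 × X = (1 × G) ∩ 𝒢
    (hX : ∀ g : G, g ∈ X ↔ (⟨1, g⟩ : RHol G) ∈ 𝒢)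
    -- (ii) X is normal in G and 1 × X is normal in 𝒢
    (hXnormalG : X.Normal)
    -- (iii) the action (Xh)^(φ,g) = X h^φ g of 𝒢 on right cosets of X is transitive
    (htrans : ∀ h₁ h₂ : G, ∃ x ∈ 𝒢, (RHol.aut x) h₁ * (RHol.el x) * h₂⁻¹ ∈ X)
    -- D is a (v,k,λ)-difference set in G
    (hD : IsDiffSet D v k l) :
    -- then 𝒟 = {(φ,d) ∈ 𝒢 : d ∈ D} is a (v,k,λ)-difference set in 𝒢
    IsDiffSet {x : 𝒢 | (x : RHol G).el ∈ D} v k l := by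
  have hsurj : Function.Surjective fun x : 𝒢 => (x : RHol G).el :=
    RHol.el_surjective_of_transitive (fun g => (hX g).1) fun h => by simpa using htrans 1 h
  have : Finite 𝒢 := Nat.finite_of_card_ne_zero (hcard ▸ Nat.card_pos.ne')
  exact RHol.isDiffSet_el_mem ((Nat.bijective_iff_surjective_and_card _).2 ⟨hsurj, hcard⟩)
    h𝒢le hD

/-- Combinatorial transfer for difference sets (Theorem 1.1 for DSs). -/
theorem combinatorial_transfer_diff_set {G : Type*} [Group G] [Finite G]
    (D : Set G) (v k l : ℕ)
    (𝒢 : Subgroup (RHol G)) (X : Subgroup G)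
    -- 𝒢 ≤ Aut(G)_D ⋉ G : every automorphism component of 𝒢 fixes D setwise
    (h𝒢le : ∀ x ∈ 𝒢, (RHol.aut x) '' D = D)
    -- (i) |𝒢| = |G|
    (hcard : Nat.card 𝒢 = Nat.card G)
    -- 1 × X = (1 × G) ∩ 𝒢
    (hX : ∀ g : G, g ∈ X ↔ (⟨1, g⟩ : RHol G) ∈ 𝒢)
    -- (ii) X is normal in G and 1 × X is normal in 𝒢
    (hXnormalG : X.Normal)
    (hXnormal𝒢 : ∀ x ∈ 𝒢, ∀ g ∈ X, ((x⁻¹ * ⟨1, g⟩ * x : RHol G)).el ∈ X)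
    -- (iii) the action (Xh)^(φ,g) = X h^φ g of 𝒢 on right cosets of X is transitive
    (htrans : ∀ h₁ h₂ : G, ∃ x ∈ 𝒢, (RHol.aut x) h₁ * (RHol.el x) * h₂⁻¹ ∈ X)
    -- D is a (v,k,λ)-difference set in G
    (hD : IsDiffSet D v k l) :
    -- then 𝒟 = {(φ,d) ∈ 𝒢 : d ∈ D} is a (v,k,λ)-difference set in 𝒢
    IsDiffSet {x : 𝒢 | (x : RHol G).el ∈ D} v k l :=
  combinatorial_transfer_diff_set_general D v k l 𝒢 X h𝒢le hcard hX hXnormalG htrans hD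
end

section
/- Let G be a finite group, D ⊆ G a partial difference set, and 𝒢 ≤ Aut(G)_D ⋉ G a subgroup with |𝒢| = |G| such that 1 × X := (1 × G) ∩ 𝒢 is normal in both 1 × G and 𝒢, and 𝒢 acts transitively on the right cosets of X in G via (Xh)^(φ,g) = X h^φ g. Then 𝒟 := {(φ,d) ∈ 𝒢 : d ∈ D} is a partial difference set in 𝒢 with the same parameters (v,k,λ,μ) as D. -/
section Defs

variable {G : Type*} [Group G]

def IsPDS (D : Set G) (v k l μ : ℕ) : Prop :=
  Nat.card G = v ∧ Nat.card D = k ∧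
    (∀ g ∈ D, g ≠ 1 → diffCount D g = l) ∧
    (∀ g : G, g ∉ D → g ≠ 1 → diffCount D g = μ)

end Defs

section DiffCount

variable {G H : Type*} [Group G] [Group H]

def diffCountEquiv (D : Set G) (g : G) :
    {p : D × D // (p.1 : G) * (p.2 : G)⁻¹ = g} ≃ {d : G // d ∈ D ∧ g * d ∈ D} where
  toFun p := ⟨p.1.2, p.1.2.2, by
    obtain ⟨⟨a, b⟩, rfl⟩ := p
    simp⟩
  invFun d := ⟨(⟨g * d.1, d.2.2⟩, ⟨d.1, d.2.1⟩), mul_inv_cancel_right _ _⟩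
  left_inv p := by
    obtain ⟨⟨⟨a, ha⟩, ⟨b, hb⟩⟩, rfl⟩ := p
    simp
  right_inv _ := rfl

lemma diffCount_eq_card (D : Set G) (g : G) :
    diffCount D g = Nat.card {d : G // d ∈ D ∧ g * d ∈ D} :=
  Nat.card_congr (diffCountEquiv D g)

lemma IsPDS.comap {D : Set G} {v k l μ : ℕ} (hD : IsPDS D v k l μ) (e : H ≃ G) (he : e 1 = 1)
    (hdiff : ∀ z, diffCount (e ⁻¹' D) z = diffCount D (e z)) : IsPDS (e ⁻¹' D) v k l μ := by
  obtain ⟨hv, hk, hl, hμ⟩ := hD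
  have he_ne_one {z : H} (hz : z ≠ 1) : e z ≠ 1 := by
    rwa [← he, e.injective.ne_iff]
  refine ⟨(Nat.card_congr e).trans hv, (Nat.card_congr (e.subtypeEquiv fun _ => Iff.rfl)).trans hk,
    fun z hz hz1 => ?_, fun z hz hz1 => ?_⟩
  · rw [hdiff]
    exact hl _ hz (he_ne_one hz1)
  · rw [hdiff]
    exact hμ _ hz (he_ne_one hz1)

end DiffCount

lemma MulEquiv.symm_apply_mem_iff_of_image_eq {G : Type*} [Group G] {ψ : MulAut G} {D : Set G}
    (h : ψ '' D = D) (a : G) : ψ.symm a ∈ D ↔ a ∈ D := by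
  conv_rhs => rw [← h]
  exact (Set.mem_image_equiv (f := ψ.toEquiv)).symm

namespace RHol

variable {G : Type*} [Group G]

instance [Finite G] : Finite (RHol G) :=
  Finite.of_injective (fun x : RHol G => ((x.aut : G → G), x.el)) fun a b h => by
    simp only [Prod.mk.injEq] at h
    exact RHol.ext (MulEquiv.ext (congrFun h.1)) h.2

lemma inv_el_inv_s1 (a : RHol G) : a⁻¹.el⁻¹ = a.aut.symm a.el := by
  simp

variable (𝒢 : Subgroup (RHol G))

def subgroupEl (x : 𝒢) : G := (x : RHol G).el

lemma subgroupEl_surjective {X : Subgroup G} [X.Normal] (hX : ∀ g ∈ X, (⟨1, g⟩ : RHol G) ∈ 𝒢)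
    (htrans : ∀ h : G, ∃ x ∈ 𝒢, x.el * h⁻¹ ∈ X) : Function.Surjective (subgroupEl 𝒢) := by
  intro h
  obtain ⟨x, hx𝒢, hxX⟩ := htrans h
  have hcorr : x.el⁻¹ * h ∈ X := by
    simpa [mul_assoc] using Subgroup.Normal.conj_mem ‹_› _ (X.inv_mem hxX) x.el⁻¹
  exact ⟨⟨x * ⟨1, x.el⁻¹ * h⟩, 𝒢.mul_mem hx𝒢 (hX _ hcorr)⟩, by simp [subgroupEl]⟩

def subgroupTwistedEl (y : 𝒢) : G := (y : RHol G).aut.symm (y : RHol G).el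

lemma subgroupTwistedEl_bijective (hbij : Function.Bijective (subgroupEl 𝒢)) :
    Function.Bijective (subgroupTwistedEl 𝒢) := by
  have hcomp : subgroupTwistedEl 𝒢 = (·⁻¹) ∘ subgroupEl 𝒢 ∘ (·⁻¹) := by
    funext y
    exact (inv_el_inv_s1 (y : RHol G)).symm
  rw [hcomp]
  exact inv_involutive.bijective.comp (hbij.comp inv_involutive.bijective)

lemma diffCount_preimage_subgroupEl {D : Set G} (hD : ∀ x ∈ 𝒢, (RHol.aut x) '' D = D)
    (hbij : Function.Bijective (subgroupEl 𝒢)) (z : 𝒢) :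
    diffCount (subgroupEl 𝒢 ⁻¹' D) z = diffCount D (subgroupEl 𝒢 z) := by
  rw [diffCount_eq_card, diffCount_eq_card]
  refine Nat.card_congr (Equiv.subtypeEquiv
    (Equiv.ofBijective _ (subgroupTwistedEl_bijective 𝒢 hbij)) fun y => ?_)
  have hfix := MulEquiv.symm_apply_mem_iff_of_image_eq (hD _ y.2)
  have hmul : (z * y : RHol G).el = (y : RHol G).aut (z : RHol G).el * (y : RHol G).el := rfl
  simp only [Set.mem_preimage, subgroupEl, Subgroup.coe_mul, hmul, Equiv.ofBijective_apply,
    subgroupTwistedEl, ← hfix ((y : RHol G).aut _ * _), map_mul, MulEquiv.symm_apply_apply]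
  exact (and_congr (hfix _) Iff.rfl).symm

end RHol

theorem combinatorial_transfer_pds_general {G : Type*} [Group G] [Finite G]
    (D : Set G) (v k l μ : ℕ)
    (𝒢 : Subgroup (RHol G)) (X : Subgroup G)
    (h𝒢le : ∀ x ∈ 𝒢, (RHol.aut x) '' D = D)
    (hcard : Nat.card 𝒢 = Nat.card G)
    (hX : ∀ g : G, g ∈ X ↔ (⟨1, g⟩ : RHol G) ∈ 𝒢)
    (hXnormalG : X.Normal)
    (htrans : ∀ h₁ h₂ : G, ∃ x ∈ 𝒢, (RHol.aut x) h₁ * (RHol.el x) * h₂⁻¹ ∈ X)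
    (hD : IsPDS D v k l μ) :
    IsPDS {x : 𝒢 | (x : RHol G).el ∈ D} v k l μ := by
  have hsurj : Function.Surjective (RHol.subgroupEl 𝒢) :=
    RHol.subgroupEl_surjective 𝒢 (fun g => (hX g).mp) fun h => by simpa using htrans 1 h
  have hbij : Function.Bijective (RHol.subgroupEl 𝒢) :=
    (Nat.bijective_iff_surjective_and_card _).mpr ⟨hsurj, hcard⟩
  exact hD.comap (Equiv.ofBijective _ hbij) (rfl : RHol.subgroupEl 𝒢 1 = 1)
    (RHol.diffCount_preimage_subgroupEl 𝒢 h𝒢le hbij)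

/-- Combinatorial transfer for partial difference sets (Theorem 1.1 for PDSs). -/
theorem combinatorial_transfer_pds {G : Type*} [Group G] [Finite G]
    (D : Set G) (v k l μ : ℕ)
    (𝒢 : Subgroup (RHol G)) (X : Subgroup G)
    (h𝒢le : ∀ x ∈ 𝒢, (RHol.aut x) '' D = D)
    (hcard : Nat.card 𝒢 = Nat.card G)
    (hX : ∀ g : G, g ∈ X ↔ (⟨1, g⟩ : RHol G) ∈ 𝒢)
    (hXnormalG : X.Normal)
    (hXnormal𝒢 : ∀ x ∈ 𝒢, ∀ g ∈ X, ((x⁻¹ * ⟨1, g⟩ * x : RHol G)).el ∈ X)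
    (htrans : ∀ h₁ h₂ : G, ∃ x ∈ 𝒢, (RHol.aut x) h₁ * (RHol.el x) * h₂⁻¹ ∈ X)
    (hD : IsPDS D v k l μ) :
    IsPDS {x : 𝒢 | (x : RHol G).el ∈ D} v k l μ :=
  combinatorial_transfer_pds_general D v k l μ 𝒢 X h𝒢le hcard hX hXnormalG htrans hD
end

section
/- Let X be an abelian group and let G be an abelian group containing X as a subgroup of index 2. If G contains a regular partial difference set D (i.e., a PDS with D = D^{(-1)} and 1 ∉ D), then the generalized dihedral extension of X contains a partial difference set with the same parameters as D. -/
/-!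
Choose `t ∉ X` and send `x ↦ ι x` and `t * x ↦ ι x * g` for `x ∈ X`; this is a bijection `φ : G → H`
fixing `1`. A direct computation shows `φ b * (φ c)⁻¹ = φ (b * c⁻¹)` when `b` and `c` lie in the same
coset of `X` and `φ b * (φ c)⁻¹ = φ (b * c)` otherwise. Since `D = D⁻¹`, replacing `c` by `c⁻¹` is a
permutation of `D`, so `φ '' D` has the same difference counts as `D`.
-/

section Defs

variable {G : Type*} [Group G]

/-- `H` is (isomorphic to) the generalized dihedral extension of the abelian group `X`:
`H = ⟨X, g⟩` with `g² = 1` and `g x g = x⁻¹` for all `x ∈ X`, with `X` of index 2. -/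
def IsGenDihedralExtOf (H : Type*) [Group H] (X : Type*) [CommGroup X] : Prop :=
  ∃ (ι : X →* H) (g : H), Function.Injective ι ∧ g ∉ ι.range ∧ g ^ 2 = 1 ∧
    (∀ x : X, g * ι x * g = ι x⁻¹) ∧ (∀ h : H, h ∈ ι.range ∨ ∃ x : X, h = ι x * g)

end Defs

open Function

section DiffCount

variable {G H : Type*} [Group G] [Group H]

theorem diffCount_image_of_equiv {φ : G → H} (hφ : Injective φ) {D : Set G} {a : G} (σ : D ≃ D)
    (h : ∀ b c : D, φ b * (φ c)⁻¹ = φ a ↔ (b : G) * (σ c : G)⁻¹ = a) :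
    diffCount (φ '' D) (φ a) = diffCount D a := by
  let eD : D ≃ φ '' D := Equiv.Set.image φ D hφ
  refine (Nat.card_congr (Equiv.subtypeEquiv (eD.prodCongr (σ.symm.trans eD)) ?_)).symm
  rintro ⟨b, c⟩
  simpa [eD] using (h b (σ.symm c)).symm

theorem IsPDS.image_of_bijective {D : Set G} {v k l μ : ℕ} (hD : IsPDS D v k l μ) {φ : G → H}
    (hφ : Bijective φ) (hφ1 : φ 1 = 1) (hcount : ∀ a, diffCount (φ '' D) (φ a) = diffCount D a) :
    IsPDS (φ '' D) v k l μ := by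
  obtain ⟨hv, hk, hl, hμ⟩ := hD
  have hφ_eq_one {a : G} (ha : φ a ≠ 1) : a ≠ 1 := by rintro rfl; exact ha hφ1
  refine ⟨hv ▸ (Nat.card_eq_of_bijective φ hφ).symm,
    hk ▸ (Nat.card_congr (Equiv.Set.image φ D hφ.1)).symm, ?_, ?_⟩
  · rintro _ ⟨a, ha, rfl⟩ ha1
    exact hcount a ▸ hl a ha (hφ_eq_one ha1)
  · intro h hD h1
    obtain ⟨a, rfl⟩ := hφ.2 h
    exact hcount a ▸ hμ a (fun ha => hD ⟨a, ha, rfl⟩) (hφ_eq_one h1)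

end DiffCount

section GenDihedral

variable {X H : Type*} [CommGroup X] [Group H] {ι : X →* H} {g : H}

theorem reflection_mul (hg2 : g ^ 2 = 1) (hconj : ∀ x, g * ι x * g = ι x⁻¹) (x : X) :
    g * ι x = ι x⁻¹ * g := by
  rw [← hconj, mul_assoc _ g, ← pow_two, hg2, mul_one]

theorem reflection_inv (hconj : ∀ x, g * ι x * g = ι x⁻¹) (x : X) :
    (ι x * g)⁻¹ = ι x * g := by
  rw [inv_eq_iff_mul_eq_one, mul_assoc, ← mul_assoc g, hconj, ← map_mul, mul_inv_cancel, map_one]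

theorem reflection_mul_inv (hg2 : g ^ 2 = 1) (hconj : ∀ x, g * ι x * g = ι x⁻¹) (u w : X) :
    ι u * g * (ι w)⁻¹ = ι (u * w) * g := by
  rw [← map_inv, mul_assoc, reflection_mul hg2 hconj, inv_inv, ← mul_assoc, ← map_mul]

theorem mul_inv_reflection (hconj : ∀ x, g * ι x * g = ι x⁻¹) (u w : X) :
    ι u * (ι w * g)⁻¹ = ι (u * w) * g := by
  rw [reflection_inv hconj, ← mul_assoc, ← map_mul]

theorem reflection_mul_inv_reflection (hconj : ∀ x, g * ι x * g = ι x⁻¹) (u w : X) :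
    ι u * g * (ι w * g)⁻¹ = ι (u * w⁻¹) := by
  rw [reflection_inv hconj, mul_assoc, ← mul_assoc g, hconj, ← map_mul]

end GenDihedral

section Correspondence

variable {G H : Type*} [CommGroup G] [Group H] {X : Subgroup G} {t : G}

theorem Subgroup.mul_inv_mem_iff_mul_mem_of_index_two (hX : X.index = 2) (b c : G) :
    b * c⁻¹ ∈ X ↔ b * c ∈ X := by
  rw [X.mul_mem_iff_of_index_two hX, X.mul_mem_iff_of_index_two hX, inv_mem_iff]

theorem Subgroup.inv_mul_mem_of_index_two (hX : X.index = 2) (ht : t ∉ X) {a : G} (ha : a ∉ X) :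
    t⁻¹ * a ∈ X :=
  (X.mul_mem_iff_of_index_two hX).mpr (iff_of_false (inv_mem_iff.not.mpr ht) ha)

open Classical in
noncomputable def toDihedral (hX : X.index = 2) (ht : t ∉ X) (ι : X →* H) (g : H) (a : G) : H :=
  if ha : a ∈ X then ι ⟨a, ha⟩ else ι ⟨t⁻¹ * a, X.inv_mul_mem_of_index_two hX ht ha⟩ * g

variable (hX : X.index = 2) (ht : t ∉ X) {ι : X →* H} {g : H}

theorem toDihedral_of_mem {a : G} (ha : a ∈ X) : toDihedral hX ht ι g a = ι ⟨a, ha⟩ :=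
  dif_pos ha

theorem toDihedral_of_notMem {a : G} (ha : a ∉ X) :
    toDihedral hX ht ι g a = ι ⟨t⁻¹ * a, X.inv_mul_mem_of_index_two hX ht ha⟩ * g :=
  dif_neg ha

theorem toDihedral_one : toDihedral hX ht ι g 1 = 1 := by
  rw [toDihedral_of_mem hX ht X.one_mem]
  exact map_one ι

theorem toDihedral_injective (hι : Injective ι) (hg : g ∉ ι.range) :
    Injective (toDihedral hX ht ι g) := by
  have hne (u w : X) : ι u * g ≠ ι w := fun h =>
    hg ⟨u⁻¹ * w, by rw [map_mul, map_inv, ← h, inv_mul_cancel_left]⟩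
  intro b c hbc
  by_cases hb : b ∈ X <;> by_cases hc : c ∈ X
  · rw [toDihedral_of_mem hX ht hb, toDihedral_of_mem hX ht hc] at hbc
    exact congrArg Subtype.val (hι hbc)
  · rw [toDihedral_of_mem hX ht hb, toDihedral_of_notMem hX ht hc] at hbc
    exact absurd hbc.symm (hne _ _)
  · rw [toDihedral_of_notMem hX ht hb, toDihedral_of_mem hX ht hc] at hbc
    exact absurd hbc (hne _ _)
  · rw [toDihedral_of_notMem hX ht hb, toDihedral_of_notMem hX ht hc] at hbc
    exact mul_left_cancel (congrArg Subtype.val (hι (mul_right_cancel hbc)))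

theorem toDihedral_surjective (hfull : ∀ h : H, h ∈ ι.range ∨ ∃ x : X, h = ι x * g) :
    Surjective (toDihedral hX ht ι g) := by
  intro h
  rcases hfull h with ⟨x, rfl⟩ | ⟨x, rfl⟩
  · exact ⟨x, toDihedral_of_mem hX ht x.2⟩
  · have hx : t * x ∉ X := fun h => ht (by simpa using mul_mem h (inv_mem x.2))
    refine ⟨t * x, ?_⟩
    rw [toDihedral_of_notMem hX ht hx]
    simp

open Classical in
theorem toDihedral_mul_inv (hg2 : g ^ 2 = 1) (hconj : ∀ x, g * ι x * g = ι x⁻¹) (b c : G) :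
    toDihedral hX ht ι g b * (toDihedral hX ht ι g c)⁻¹ =
      toDihedral hX ht ι g (if b * c⁻¹ ∈ X then b * c⁻¹ else b * c) := by
  by_cases hb : b ∈ X <;> by_cases hc : c ∈ X
  · have hbc : b * c⁻¹ ∈ X := mul_mem hb (inv_mem hc)
    rw [if_pos hbc, toDihedral_of_mem hX ht hb, toDihedral_of_mem hX ht hc,
      toDihedral_of_mem hX ht hbc, ← map_mul_inv]
    rfl
  · have hbc : b * c ∉ X := by rw [X.mul_mem_iff_of_index_two hX]; tauto
    rw [if_neg (by rwa [X.mul_inv_mem_iff_mul_mem_of_index_two hX]), toDihedral_of_mem hX ht hb,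
      toDihedral_of_notMem hX ht hc, toDihedral_of_notMem hX ht hbc, mul_inv_reflection hconj]
    congr 2
    exact Subtype.ext (mul_left_comm _ _ _)
  · have hbc : b * c ∉ X := by rw [X.mul_mem_iff_of_index_two hX]; tauto
    rw [if_neg (by rwa [X.mul_inv_mem_iff_mul_mem_of_index_two hX]), toDihedral_of_notMem hX ht hb,
      toDihedral_of_mem hX ht hc, toDihedral_of_notMem hX ht hbc, reflection_mul_inv hg2 hconj]
    congr 2
    exact Subtype.ext (mul_assoc _ _ _)
  · have hbc : b * c⁻¹ ∈ X := by rw [X.mul_mem_iff_of_index_two hX, inv_mem_iff]; tauto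
    rw [if_pos hbc, toDihedral_of_notMem hX ht hb, toDihedral_of_notMem hX ht hc,
      toDihedral_of_mem hX ht hbc, reflection_mul_inv_reflection hconj]
    congr 1
    exact Subtype.ext (by simpa [div_eq_mul_inv] using mul_div_mul_left_eq_div b c t⁻¹)

theorem diffCount_image_toDihedral (hι : Injective ι) (hg : g ∉ ι.range) (hg2 : g ^ 2 = 1)
    (hconj : ∀ x, g * ι x * g = ι x⁻¹) {D : Set G} (hD : D⁻¹ = D) (a : G) :
    diffCount (toDihedral hX ht ι g '' D) (toDihedral hX ht ι g a) = diffCount D a := by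
  classical
  have hinj := toDihedral_injective hX ht hι hg
  have key (b c : G) : toDihedral hX ht ι g b * (toDihedral hX ht ι g c)⁻¹ =
      toDihedral hX ht ι g a ↔ b * (if a ∈ X then c⁻¹ else c) = a := by
    rw [toDihedral_mul_inv hX ht hg2 hconj, hinj.eq_iff]
    have := X.mul_inv_mem_iff_mul_mem_of_index_two hX b c
    split_ifs <;> grind
  by_cases ha : a ∈ X
  · exact diffCount_image_of_equiv hinj (Equiv.refl D) fun b c => by simpa [ha] using key b c
  · refine diffCount_image_of_equiv hinj ((Equiv.inv G).subtypeEquiv fun c => ?_) fun b c => ?_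
    · rw [Equiv.inv_apply, ← Set.mem_inv, hD]
    · simpa [ha] using key b c

end Correspondence

theorem dillon_converse_pds_general {G : Type*} [CommGroup G]
    (X : Subgroup G) (hX : X.index = 2)
    (D : Set G) (v k l μ : ℕ)
    (hPDS : IsPDS D v k l μ) (hrev : D⁻¹ = D) :
    ∀ (H : Type*) [Group H], IsGenDihedralExtOf H X → ∃ D' : Set H, IsPDS D' v k l μ := by
  rintro H _ ⟨ι, g, hι, hg, hg2, hconj, hfull⟩
  obtain ⟨t, ht, -⟩ := Subgroup.index_eq_two_iff_exists_notMem_and'.mp hX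
  exact ⟨_, hPDS.image_of_bijective
    ⟨toDihedral_injective hX ht hι hg, toDihedral_surjective hX ht hfull⟩ (toDihedral_one hX ht)
    (diffCount_image_toDihedral hX ht hι hg hg2 hconj hrev)⟩

/-- Converse to Dillon's Dihedral Trick for regular PDSs (Theorem 3.2). -/
theorem dillon_converse_pds {G : Type*} [CommGroup G] [Finite G]
    (X : Subgroup G) (hX : X.index = 2)
    (D : Set G) (v k l μ : ℕ)
    (hPDS : IsPDS D v k l μ) (h1 : (1 : G) ∉ D) (hrev : D⁻¹ = D) :
    ∀ (H : Type*) [Group H], IsGenDihedralExtOf H X → ∃ D' : Set H, IsPDS D' v k l μ :=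
  dillon_converse_pds_general X hX D v k l μ hPDS hrev
end

section
/- Let G be an abelian group containing a reversible difference set D and a subgroup X of index 2. Then every abelian group containing X as a subgroup of index 2 contains a difference set with the same parameters as D. -/
/-!
Pick `g ∉ X` and `h ∉ ι(X)` and let `f : G → H` be the bijection that is `ι` on `X` and sends
`g * x` to `h * ι x`; it intertwines right translation by `X`, and `D' = f(D)`. Representations
`ι s = a * b⁻¹` in `D'` correspond to representations `s = a * b⁻¹` in `D`. For `t ∉ ι(X)`, exactly
one of `a, b` lies in `ι(X)`, so the representations of `t` split into those with `b ∈ ι(X)` for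
`t` and for `t⁻¹`; these "anchored" counts transfer under `f` to anchored counts in `D` of elements
`u ∉ X`. In `D`, inversion `(a, b) ↦ (a⁻¹, b⁻¹)` exchanges the anchored representations of `u` and
`u⁻¹`, so each anchored count is `l / 2`, and the two halves add up to `l` again in `H`.
-/

section PairCount

variable {α β : Type*}

noncomputable def pairCount (S : Set α) (P : α → α → Prop) : ℕ :=
  Nat.card {p : S × S // P p.1 p.2}

theorem pairCount_congr {S : Set α} {P Q : α → α → Prop}
    (h : ∀ a ∈ S, ∀ b ∈ S, (P a b ↔ Q a b)) : pairCount S P = pairCount S Q :=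
  Nat.card_congr (Equiv.subtypeEquivRight fun p => h _ p.1.2 _ p.2.2)

theorem pairCount_image {f : α → β} (hf : Function.Injective f) (S : Set α)
    (P : β → β → Prop) : pairCount (f '' S) P = pairCount S fun a b => P (f a) (f b) :=
  let e := Equiv.Set.image f S hf
  Nat.card_congr ((e.prodCongr e).subtypeEquiv fun _ => Iff.rfl).symm

theorem pairCount_swap (S : Set α) (P : α → α → Prop) :
    pairCount S P = pairCount S fun a b => P b a :=
  Nat.card_congr ((Equiv.prodComm S S).subtypeEquiv fun _ => Iff.rfl)

theorem pairCount_and_add_pairCount_and_not [Finite α] (S : Set α) (P Q : α → α → Prop) :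
    pairCount S (fun a b => P a b ∧ Q a b) + pairCount S (fun a b => P a b ∧ ¬Q a b) =
      pairCount S P := by
  classical
  rw [pairCount, pairCount, pairCount, ← Nat.card_sum]
  exact Nat.card_congr <|
    ((Equiv.subtypeSubtypeEquivSubtypeInter _ _).sumCongr
      (Equiv.subtypeSubtypeEquivSubtypeInter _ _)).symm.trans
      (Equiv.sumCompl fun p : {p : S × S // P p.1 p.2} => Q p.1.1 p.1.2)

end PairCount

theorem diffCount_eq_pairCount {G : Type*} [Group G] (S : Set G) (u : G) :
    diffCount S u = pairCount S fun a b => a * b⁻¹ = u :=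
  rfl

section AnchoredDiffCount

noncomputable def anchoredDiffCount {G : Type*} [Group G] (S : Set G) (K : Subgroup G) (u : G) :
    ℕ :=
  pairCount S fun a b => b ∈ K ∧ a * b⁻¹ = u

theorem diffCount_eq_anchoredDiffCount_add {G : Type*} [Group G] [Finite G] {K : Subgroup G}
    (hK : K.index = 2) {u : G} (hu : u ∉ K) (S : Set G) :
    diffCount S u = anchoredDiffCount S K u + anchoredDiffCount S K u⁻¹ := by
  rw [diffCount_eq_pairCount, ← pairCount_and_add_pairCount_and_not S _ fun _ b => b ∈ K,
    pairCount_swap _ fun a b => a * b⁻¹ = u ∧ b ∉ K]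
  congr 1
  · exact pairCount_congr fun _ _ _ _ => and_comm
  · refine pairCount_congr fun a _ b _ => ?_
    have hinv : a * b⁻¹ = u⁻¹ ↔ b * a⁻¹ = u := by rw [← inv_inj, mul_inv_rev, inv_inv, inv_inv]
    rw [hinv, and_comm]
    refine and_congr_left fun hba => ?_
    rw [← hba, Subgroup.mul_mem_iff_of_index_two hK, inv_mem_iff] at hu
    tauto

theorem anchoredDiffCount_inv {G : Type*} [CommGroup G] {S : Set G} (hS : S⁻¹ = S)
    (K : Subgroup G) (u : G) : anchoredDiffCount S K u⁻¹ = anchoredDiffCount S K u := by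
  conv_rhs => rw [anchoredDiffCount, ← hS, ← Set.image_inv_eq_inv, pairCount_image inv_injective]
  refine pairCount_congr fun a _ b _ => ?_
  rw [inv_mem_iff, ← inv_inj (a := a⁻¹ * b⁻¹⁻¹), mul_inv_rev, inv_inv, inv_inv, mul_comm]

theorem two_mul_anchoredDiffCount {G : Type*} [CommGroup G] [Finite G] {S : Set G}
    (hS : S⁻¹ = S) {K : Subgroup G} (hK : K.index = 2) {u : G} (hu : u ∉ K) :
    2 * anchoredDiffCount S K u = diffCount S u := by
  rw [diffCount_eq_anchoredDiffCount_add hK hu, anchoredDiffCount_inv hS, two_mul]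

end AnchoredDiffCount

theorem Subgroup.inv_mul_mem_of_index_two_s5 {G : Type*} [Group G] {K : Subgroup G}
    (hK : K.index = 2) {a b : G} (ha : a ∉ K) (hb : b ∉ K) : a⁻¹ * b ∈ K := by
  rw [Subgroup.mul_mem_iff_of_index_two hK, inv_mem_iff]
  exact iff_of_false ha hb

structure IsEquivariantExtension {G H : Type*} [Group G] [Group H] {X : Subgroup G}
    (ι : X →* H) (f : G → H) : Prop where
  bijective : Function.Bijective f
  apply_coe : ∀ y : X, f y = ι y
  apply_mul_coe : ∀ (a : G) (y : X), f (a * y) = f a * ι y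

namespace IsEquivariantExtension

section Group

variable {G H : Type*} [Group G] [Group H] {X : Subgroup G} {ι : X →* H} {f : G → H}

theorem apply_mem_range_iff (hf : IsEquivariantExtension ι f) {a : G} :
    f a ∈ ι.range ↔ a ∈ X := by
  refine ⟨fun ⟨y, hy⟩ => ?_, fun ha => ⟨⟨a, ha⟩, (hf.apply_coe ⟨a, ha⟩).symm⟩⟩
  rw [← hf.apply_coe] at hy
  exact hf.bijective.1 hy ▸ y.2

theorem apply_mul_inv_eq_apply_iff (hf : IsEquivariantExtension ι f) {a b u : G} (hb : b ∈ X) :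
    f a * (f b)⁻¹ = f u ↔ a * b⁻¹ = u := by
  have hmul : f (a * b⁻¹) = f a * (f b)⁻¹ := by
    simpa [hf.apply_coe ⟨b, hb⟩] using hf.apply_mul_coe a ⟨b, hb⟩⁻¹
  rw [← hmul, hf.bijective.1.eq_iff]

theorem anchoredDiffCount_image (hf : IsEquivariantExtension ι f) (S : Set G) (u : G) :
    anchoredDiffCount (f '' S) ι.range (f u) = anchoredDiffCount S X u := by
  rw [anchoredDiffCount, pairCount_image hf.bijective.1]
  exact pairCount_congr fun _ _ _ _ => by
    rw [hf.apply_mem_range_iff]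
    exact and_congr_right hf.apply_mul_inv_eq_apply_iff

end Group

section CommGroup

variable {G H : Type*} [CommGroup G] [CommGroup H] {X : Subgroup G} {ι : X →* H} {f : G → H}

theorem apply_mul_inv_eq_coe_iff (hf : IsEquivariantExtension ι f) {a b : G} (s : X) :
    f a * (f b)⁻¹ = ι s ↔ a * b⁻¹ = s := by
  rw [mul_inv_eq_iff_eq_mul, mul_inv_eq_iff_eq_mul, mul_comm (ι s), ← hf.apply_mul_coe,
    hf.bijective.1.eq_iff, mul_comm]

theorem diffCount_image_coe (hf : IsEquivariantExtension ι f) (S : Set G) (s : X) :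
    diffCount (f '' S) (ι s) = diffCount S s := by
  rw [diffCount_eq_pairCount, diffCount_eq_pairCount, pairCount_image hf.bijective.1]
  exact pairCount_congr fun _ _ _ _ => hf.apply_mul_inv_eq_coe_iff s

end CommGroup

end IsEquivariantExtension

theorem exists_isEquivariantExtension {G H : Type*} [Group G] [Group H] {X : Subgroup G}
    (hX : X.index = 2) {ι : X →* H} (hι : Function.Injective ι) (hιX : ι.range.index = 2) :
    ∃ f : G → H, IsEquivariantExtension ι f := by
  classical
  obtain ⟨g, hg, -⟩ := Subgroup.index_eq_two_iff_exists_notMem_and.1 hX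
  obtain ⟨h, hh, -⟩ := Subgroup.index_eq_two_iff_exists_notMem_and.1 hιX
  have hgX {a : G} (ha : a ∉ X) : g⁻¹ * a ∈ X := X.inv_mul_mem_of_index_two_s5 hX hg ha
  let f : G → H := fun a => if ha : a ∈ X then ι ⟨a, ha⟩ else h * ι ⟨g⁻¹ * a, hgX ha⟩
  have hf_coe (y : X) : f y = ι y := dif_pos y.2
  have hf_not_mem {a : G} (ha : a ∉ X) : f a = h * ι ⟨g⁻¹ * a, hgX ha⟩ := dif_neg ha
  have hf_mul (a : G) (y : X) : f (a * y) = f a * ι y := by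
    by_cases ha : a ∈ X
    · calc f (a * y) = ι (⟨a, ha⟩ * y) := hf_coe (⟨a, ha⟩ * y)
        _ = f a * ι y := by rw [map_mul, ← hf_coe]
    · rw [hf_not_mem ha, hf_not_mem ((Subgroup.mul_mem_cancel_right X y.2).not.2 ha), mul_assoc,
        ← map_mul]
      congr 2
      exact Subtype.ext (mul_assoc _ _ _).symm
  have hf_range {a : G} : f a ∈ ι.range ↔ a ∈ X := by
    by_cases ha : a ∈ X
    · exact iff_of_true (ι.mem_range.2 ⟨_, (hf_coe ⟨a, ha⟩).symm⟩) ha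
    · rw [hf_not_mem ha, Subgroup.mul_mem_cancel_right _ (ι.mem_range.2 ⟨_, rfl⟩)]
      exact iff_of_false hh ha
  refine ⟨f, ⟨⟨fun a b hab => ?_, fun t => ?_⟩, hf_coe, hf_mul⟩⟩
  · by_cases ha : a ∈ X
    · have hb : b ∈ X := hf_range.1 (hab ▸ hf_range.2 ha)
      exact congrArg Subtype.val (hι ((hf_coe ⟨a, ha⟩).symm.trans (hab.trans (hf_coe ⟨b, hb⟩))))
    · have hb : b ∉ X := fun hb => ha (hf_range.1 (hab ▸ hf_range.2 hb))
      rw [hf_not_mem ha, hf_not_mem hb] at hab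
      exact mul_left_cancel (congrArg Subtype.val (hι (mul_left_cancel hab)))
  · by_cases ht : t ∈ ι.range
    · obtain ⟨s, rfl⟩ := ht
      exact ⟨s, hf_coe s⟩
    · obtain ⟨s, hs⟩ := ι.range.inv_mul_mem_of_index_two_s5 hιX hh ht
      refine ⟨g * s, ?_⟩
      have hg_one : (⟨g⁻¹ * g, hgX hg⟩ : X) = 1 := Subtype.ext (inv_mul_cancel g)
      rw [hf_mul, hs, hf_not_mem hg, hg_one, map_one, mul_one, mul_inv_cancel_left]

/-- Corollary 3.3: a reversible DS in an abelian group `G` with index-2 subgroup `X`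
yields a DS with the same parameters in every abelian group containing `X` with index 2. -/
theorem dillon_reversible_corollary {G : Type*} [CommGroup G] [Finite G]
    (D : Set G) (v k l : ℕ) (hD : IsDiffSet D v k l) (hrev : D⁻¹ = D)
    (X : Subgroup G) (hX : X.index = 2) :
    ∀ (H : Type*) [CommGroup H] [Finite H] (ι : X →* H),
      Function.Injective ι → ι.range.index = 2 →
      ∃ D' : Set H, IsDiffSet D' v k l := by
  intro H _ _ ι hι hιX
  obtain ⟨hv, hk, hl⟩ := hD
  obtain ⟨f, hf⟩ := exists_isEquivariantExtension hX hι hιX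
  refine ⟨f '' D, ?_, ?_, fun t ht => ?_⟩
  · rw [← hv, Nat.card_congr (Equiv.ofBijective f hf.bijective)]
  · rw [← hk, Nat.card_image_of_injective hf.bijective.1]
  by_cases htX : t ∈ ι.range
  · obtain ⟨s, rfl⟩ := htX
    rw [hf.diffCount_image_coe]
    exact hl s fun hs => ht (by rw [OneMemClass.coe_eq_one.1 hs, map_one])
  · have half {w : G} (hw : w ∉ X) : 2 * anchoredDiffCount D X w = l := by
      rw [two_mul_anchoredDiffCount hrev hX hw]
      exact hl w fun h => hw (h ▸ X.one_mem)
    obtain ⟨u, rfl⟩ := hf.bijective.2 t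
    obtain ⟨u', hu'⟩ := hf.bijective.2 (f u)⁻¹
    have hu : u ∉ X := mt hf.apply_mem_range_iff.2 htX
    have hu'X : u' ∉ X := fun h => htX (inv_mem_iff.1 (hu' ▸ hf.apply_mem_range_iff.2 h))
    rw [diffCount_eq_anchoredDiffCount_add hιX htX, ← hu', hf.anchoredDiffCount_image,
      hf.anchoredDiffCount_image]
    have := half hu
    have := half hu'X
    omega
end

section
/- Let F = GF(2^t) with trace map tr(α) = Σ_{i=0}^{t-1} α^{2^i}. For any m ≥ 0, any g of multiplicative order 2^t − 1, and any 1 ≤ ℓ ≤ t−1: tr( g^{m+2^{ℓ-1}} + g^{2m+2^{ℓ-1}} + tr(g)·g^m + Σ_{0 ≤ k ≤ t-1, k ≢ ℓ-1, ℓ-2 (mod t)} g^{m+2^k} ) = 0. -/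
/-!
With `k ≡ ℓ - 2 (mod t)` and `y = g ^ (m + 2 ^ k)`, Frobenius periodicity gives
`y ^ 2 = g ^ (2 * m + 2 ^ (ℓ - 1))`, and splitting the terms `k` and `ℓ - 1` off
`tr(g) * g ^ m = ∑ j, g ^ (m + 2 ^ j)` shows, in characteristic two, that the argument of the
trace is `y ^ 2 + y`. Its trace telescopes to `y ^ (2 ^ t) + y = 0`.
-/

open Finset

namespace CharTwo

variable {R : Type*} [CommRing R] [CharP R 2]

theorem sq_add_self_pow_two_pow (y : R) (i : ℕ) :
    (y ^ 2 + y) ^ 2 ^ i = y ^ 2 ^ (i + 1) - y ^ 2 ^ i := by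
  rw [add_pow_char_pow, ← pow_mul, ← pow_succ', sub_eq_add]

theorem sum_range_sq_add_self_pow_two_pow (y : R) (n : ℕ) :
    ∑ i ∈ range n, (y ^ 2 + y) ^ 2 ^ i = y ^ 2 ^ n + y := by
  simp_rw [sq_add_self_pow_two_pow]
  rw [sum_range_sub (fun i => y ^ 2 ^ i), pow_zero, pow_one, sub_eq_add]

theorem pow_add_two_pow_sum_eq_sq_add_self (s : Finset ℕ) {a b : ℕ} (ha : a ∈ s) (hb : b ∈ s)
    (hab : a ≠ b) (g : R) (m : ℕ) (hg : g ^ 2 ^ (b + 1) = g ^ 2 ^ a) :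
    g ^ (m + 2 ^ a) + g ^ (2 * m + 2 ^ a) + (∑ j ∈ s, g ^ 2 ^ j) * g ^ m +
        ∑ k ∈ s.filter (fun k => k ≠ a ∧ k ≠ b), g ^ (m + 2 ^ k) =
      (g ^ (m + 2 ^ b)) ^ 2 + g ^ (m + 2 ^ b) := by
  have hsq : g ^ (2 * m + 2 ^ a) = (g ^ (m + 2 ^ b)) ^ 2 := by
    rw [← pow_mul, add_mul, pow_add, pow_add, ← pow_succ, ← hg, mul_comm 2 m]
  have hfilter : s.filter (fun k => k ≠ a ∧ k ≠ b) = (s.erase a).erase b := by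
    ext k
    simp only [mem_filter, mem_erase]
    tauto
  have hsplit : (∑ j ∈ s, g ^ 2 ^ j) * g ^ m =
      g ^ (m + 2 ^ a) + (g ^ (m + 2 ^ b) + ∑ k ∈ (s.erase a).erase b, g ^ (m + 2 ^ k)) := by
    simp_rw [sum_mul, ← pow_add, add_comm _ m]
    rw [← add_sum_erase s _ ha, ← add_sum_erase _ _ (mem_erase.2 ⟨hab.symm, hb⟩)]
  rw [hsq, hsplit, hfilter]
  linear_combination
    (g ^ (m + 2 ^ a) + ∑ k ∈ (s.erase a).erase b, g ^ (m + 2 ^ k)) * two_eq_zero (R := R)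

end CharTwo

theorem Nat.add_sub_two_mod_add_one {ℓ t : ℕ} (hℓ : 1 ≤ ℓ) (hℓt : ℓ < t) :
    (ℓ + t - 2) % t + 1 = ℓ - 1 ∨ (ℓ + t - 2) % t + 1 = t ∧ ℓ = 1 := by
  rcases Nat.lt_or_ge ℓ 2 with h | h
  · rw [Nat.mod_eq_of_lt (by omega)]
    omega
  · rw [show ℓ + t - 2 = ℓ - 2 + t by omega, Nat.add_mod_right, Nat.mod_eq_of_lt (by omega)]
    omega

theorem trace_identity_general (t : ℕ) (F : Type*) [Field F] [Fintype F]
    (hF : Fintype.card F = 2 ^ t) (g : F)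
    (m ℓ : ℕ) (hℓ1 : 1 ≤ ℓ) (hℓ2 : ℓ ≤ t - 1) :
    ∑ i ∈ Finset.range t,
      (g ^ (m + 2 ^ (ℓ - 1)) + g ^ (2 * m + 2 ^ (ℓ - 1)) +
        (∑ j ∈ Finset.range t, g ^ 2 ^ j) * g ^ m +
        ∑ k ∈ (Finset.range t).filter (fun k => k ≠ ℓ - 1 ∧ k ≠ (ℓ + t - 2) % t),
          g ^ (m + 2 ^ k)) ^ 2 ^ i = 0 := by
  have : CharP F 2 := charP_of_card_eq_prime_pow hF
  have hfrob (x : F) : x ^ 2 ^ t = x := hF ▸ FiniteField.pow_card x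
  obtain ⟨hcycle, hab⟩ :
      g ^ 2 ^ ((ℓ + t - 2) % t + 1) = g ^ 2 ^ (ℓ - 1) ∧ ℓ - 1 ≠ (ℓ + t - 2) % t := by
    rcases Nat.add_sub_two_mod_add_one (t := t) hℓ1 (by omega) with hb | ⟨hb, rfl⟩
    · exact ⟨by rw [hb], by omega⟩
    · exact ⟨by rw [hb, hfrob, Nat.sub_self, pow_zero, pow_one], by omega⟩
  have hbt : (ℓ + t - 2) % t < t := Nat.mod_lt _ (by omega)
  rw [CharTwo.pow_add_two_pow_sum_eq_sq_add_self (range t) (mem_range.2 (by omega))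
    (mem_range.2 hbt) hab g m hcycle, CharTwo.sum_range_sq_add_self_pow_two_pow, hfrob,
    CharTwo.add_self_eq_zero]

/-- The trace identity of Lemma 5.5: in `GF(2^t)`, with `tr(x) = ∑_{i<t} x^(2^i)` and `g`
of multiplicative order `2^t - 1`, for `1 ≤ ℓ ≤ t-1` and any `m`,
`tr(g^(m+2^(ℓ-1)) + g^(2m+2^(ℓ-1)) + tr(g)·g^m + ∑_{k ≠ ℓ-1, ℓ-2 mod t} g^(m+2^k)) = 0`. -/
theorem trace_identity (t : ℕ) (F : Type*) [Field F] [Fintype F]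
    (hF : Fintype.card F = 2 ^ t) (g : F) (hg : orderOf g = 2 ^ t - 1)
    (m ℓ : ℕ) (hℓ1 : 1 ≤ ℓ) (hℓ2 : ℓ ≤ t - 1) :
    ∑ i ∈ Finset.range t,
      (g ^ (m + 2 ^ (ℓ - 1)) + g ^ (2 * m + 2 ^ (ℓ - 1)) +
        (∑ j ∈ Finset.range t, g ^ 2 ^ j) * g ^ m +
        ∑ k ∈ (Finset.range t).filter (fun k => k ≠ ℓ - 1 ∧ k ≠ (ℓ + t - 2) % t),
          g ^ (m + 2 ^ k)) ^ 2 ^ i = 0 :=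
  trace_identity_general t F hF g m ℓ hℓ1 hℓ2
end
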